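/- Let A be a k-th order 2n-dimensional cubical tensor. Then (J^⊤ A)^{⊤_σ} + J A = 0 holds for every permutation σ of {1,…,k} (i.e., A is a Hamiltonian cubical tensor) if and only if there exists a supersymmetric k-th order 2n-dimensional tensor R such that A = J R. -/
import Mathlib


open Finset Matrix

/-- A `k`-th order cubical tensor with index set `ι` (entries `A i₁ … i_k ∈ ℝ`,
encoded as a function on index tuples). -/
abbrev Tensor (k : ℕ) (ι : Type) : Type := (Fin k → ι) → ℝ

/-- The transpose `A^{⊤_σ}` of a tensor `A` associated with a permutation `σ`:
`(A^{⊤_σ})_{i_{σ(1)} … i_{σ(k)}} = A_{i_1 … i_k}`. -/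
def tTranspose {k : ℕ} {ι : Type} (σ : Equiv.Perm (Fin k)) (A : Tensor k ι) : Tensor k ι :=
  fun i => A (i ∘ σ)

/-- A cubical tensor is supersymmetric if its entries are invariant under any
permutation of the indices. -/
def IsSupersymmetric {k : ℕ} {ι : Type} (A : Tensor k ι) : Prop :=
  ∀ σ : Equiv.Perm (Fin k), tTranspose σ A = A

/-- The scalar `A x^k = ∑_{i_1,…,i_k} A_{i_1…i_k} x_{i_1} ⋯ x_{i_k}`. -/
def tPow {k : ℕ} {ι : Type} [Fintype ι] (A : Tensor k ι) (x : ι → ℝ) : ℝ :=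
  ∑ i : Fin k → ι, A i * ∏ t, x (i t)

/-- The vector `A x^{k-1}` (here the tensor has order `k+1`):
`(A x^k)_a = ∑_{i_2,…,i_{k+1}} A_{a i_2 … i_{k+1}} x_{i_2} ⋯ x_{i_{k+1}}`. -/
def tVec {k : ℕ} {ι : Type} [Fintype ι] (A : Tensor (k + 1) ι) (x : ι → ℝ) : ι → ℝ :=
  fun a => ∑ i : Fin k → ι, A (Fin.cons a i) * ∏ t, x (i t)

/-- The matrix `A x^{k-2}` (here the tensor has order `k+2`):
`(A x^k)_{a b} = ∑_{i_3,…,i_{k+2}} A_{a b i_3 … i_{k+2}} x_{i_3} ⋯ x_{i_{k+2}}`. -/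
def tMat {k : ℕ} {ι : Type} [Fintype ι] (A : Tensor (k + 2) ι) (x : ι → ℝ) : Matrix ι ι ℝ :=
  Matrix.of fun a b => ∑ i : Fin k → ι, A (Fin.cons a (Fin.cons b i)) * ∏ t, x (i t)

/-- The matrix-tensor product `(RA)_{i_1 i_2 … i_k} = ∑_j R_{i_1 j} A_{j i_2 … i_k}`. -/
def matMulT {k : ℕ} {ι : Type} [Fintype ι] (R : Matrix ι ι ℝ) (A : Tensor (k + 1) ι) :
    Tensor (k + 1) ι :=
  fun i => ∑ j : ι, R (i 0) j * A (Function.update i 0 j)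

/-- The standard symplectic matrix `J = [[0, Iₙ], [-Iₙ, 0]]` of size `2n × 2n`,
with `ℝ^{2n}` realized as `Fin n ⊕ Fin n → ℝ`. -/
def sympJ (n : ℕ) : Matrix (Fin n ⊕ Fin n) (Fin n ⊕ Fin n) ℝ :=
  Matrix.fromBlocks 0 1 (-1) 0

/-- A cubical tensor `A` of even dimension is a Hamiltonian cubical tensor if
`(Jᵀ A)^{⊤_σ} + J A = 0` for every permutation `σ`. -/
def IsHamiltonianTensor {k n : ℕ} (A : Tensor (k + 1) (Fin n ⊕ Fin n)) : Prop :=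
  ∀ σ : Equiv.Perm (Fin (k + 1)),
    tTranspose σ (matMulT (sympJ n)ᵀ A) + matMulT (sympJ n) A = 0


lemma matMulT_matMulT {k : ℕ} {ι : Type} [Fintype ι] [DecidableEq ι]
    (S R : Matrix ι ι ℝ) (A : Tensor (k + 1) ι) :
    matMulT S (matMulT R A) = matMulT (S * R) A := by
  funext i
  simp only [matMulT, Function.update_self, Function.update_idem, Matrix.mul_apply,
    Finset.mul_sum, Finset.sum_mul]
  rw [Finset.sum_comm]
  exact Finset.sum_congr rfl fun l _ => Finset.sum_congr rfl fun j _ => by ring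

lemma matMulT_one {k : ℕ} {ι : Type} [Fintype ι] [DecidableEq ι]
    (A : Tensor (k + 1) ι) : matMulT (1 : Matrix ι ι ℝ) A = A := by
  funext i
  simp [matMulT, Matrix.one_apply]

lemma matMulT_neg {k : ℕ} {ι : Type} [Fintype ι] [DecidableEq ι]
    (R : Matrix ι ι ℝ) (A : Tensor (k + 1) ι) : matMulT (-R) A = -(matMulT R A) := by
  funext i
  simp [matMulT]

lemma sympJ_sq (n : ℕ) : sympJ n * sympJ n = -1 := by
  have : (-1 : Matrix (Fin n ⊕ Fin n) (Fin n ⊕ Fin n) ℝ) =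
      Matrix.fromBlocks (-1) 0 0 (-1) := by
    rw [← Matrix.fromBlocks_one, Matrix.fromBlocks_neg]; congr 1 <;> simp
  rw [this]
  simp [sympJ, Matrix.fromBlocks_multiply]

lemma sympJ_transpose (n : ℕ) : (sympJ n)ᵀ = -sympJ n := by
  simp only [sympJ, Matrix.fromBlocks_transpose, Matrix.fromBlocks_neg]
  congr 1 <;> simp

lemma sympJT_mul (n : ℕ) : (sympJ n)ᵀ * sympJ n = 1 := by
  rw [sympJ_transpose, neg_mul, sympJ_sq, neg_neg]

lemma sympJ_mul_T (n : ℕ) : sympJ n * (sympJ n)ᵀ = 1 := by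
  rw [sympJ_transpose, mul_neg, sympJ_sq, neg_neg]

/-- a cubical tensor `A` (of order `k + 1` and dimension `2n`) is a
Hamiltonian cubical tensor iff `A = J R` for some supersymmetric tensor `R`. -/
theorem hamiltonianTensor_iff_JR (n k : ℕ) (A : Tensor (k + 1) (Fin n ⊕ Fin n)) :
    IsHamiltonianTensor A ↔
      ∃ R : Tensor (k + 1) (Fin n ⊕ Fin n), IsSupersymmetric R ∧
        A = matMulT (sympJ n) R := by
  constructor
  · intro h
    refine ⟨matMulT (sympJ n)ᵀ A, ?_, ?_⟩
    · intro σ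
      have h1 := h 1
      have hσ := h σ
      have hid : tTranspose 1 (matMulT (sympJ n)ᵀ A) = matMulT (sympJ n)ᵀ A := by
        funext i; simp [tTranspose]
      rw [hid] at h1
      exact add_right_cancel (hσ.trans h1.symm)
    · rw [matMulT_matMulT, sympJ_mul_T, matMulT_one]
  · rintro ⟨R, hR, rfl⟩
    intro σ
    rw [matMulT_matMulT, matMulT_matMulT, sympJT_mul, matMulT_one, sympJ_sq,
      show (-1 : Matrix (Fin n ⊕ Fin n) (Fin n ⊕ Fin n) ℝ) = -(1) from rfl,
      matMulT_neg, matMulT_one, hR σ]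
    exact add_neg_cancel R
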